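/- Let n ≥ 2 and let r ≡ 2 (mod 4), r ≥ 2. The set 𝒜 = {a_0, a_1, a_1^{−1}, a_2, …, a_{n−1}}, where a_0 = s_0^2 and a_i = s_0^{r/2}·s_i for 1 ≤ i ≤ n−1, generates the group A_{r,n} of alternating colored permutations. -/

import Mathlib

open Multiplicative

namespace ACP

/-- The action of `Sₙ` on color vectors by permuting coordinates. -/
def permAct (r n : ℕ) : Equiv.Perm (Fin n) →* MulAut (Fin n → Multiplicative (ZMod r)) where
  toFun τ :=
    { toFun := fun z => z ∘ τ.symm
      invFun := fun z => z ∘ τ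
      left_inv := fun z => by ext i; simp
      right_inv := fun z => by ext i; simp
      map_mul' := fun z w => rfl }
  map_one' := by ext z i; rfl
  map_mul' a b := by ext z i; rfl

/-- The group of colored permutations `G_{r,n} = ℤ_r ≀ Sₙ`. -/
abbrev G (r n : ℕ) : Type := (Fin n → Multiplicative (ZMod r)) ⋊[permAct r n] Equiv.Perm (Fin n)

/-- The Coxeter-like generators: `gen r n 0 = s₀` colors the digit 1 by one color,
`gen r n i = sᵢ` (for `1 ≤ i ≤ n-1`) is the adjacent transposition `(i, i+1)`. -/
def gen (r n : ℕ) (i : ℕ) : G r n :=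
  if h : 0 < i ∧ i < n then
    ⟨1, Equiv.swap ⟨i - 1, by omega⟩ ⟨i, h.2⟩⟩
  else
    ⟨fun j => if (j : ℕ) = 0 then ofAdd (1 : ZMod r) else 1, 1⟩

def zmod2ToUnits : Multiplicative (ZMod 2) →* ℤˣ where
  toFun z := (-1) ^ (toAdd z).val
  map_one' := rfl
  map_mul' := by decide

def csumHom (r n : ℕ) (hr : 2 ∣ r) :
    (Fin n → Multiplicative (ZMod r)) →* Multiplicative (ZMod 2) where
  toFun z := ofAdd (∑ i, ZMod.castHom hr (ZMod 2) (toAdd (z i)))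
  map_one' := by simp
  map_mul' z w := by
    have h : ∀ i, ZMod.castHom hr (ZMod 2) (toAdd ((z * w) i))
        = ZMod.castHom hr (ZMod 2) (toAdd (z i)) + ZMod.castHom hr (ZMod 2) (toAdd (w i)) :=
      fun i => map_add _ _ _
    simp only [h, Finset.sum_add_distrib, ofAdd_add]

/-- The sign character of `G_{r,n}` (for even `r`): sends every Coxeter-like
generator `sᵢ` to `-1`. -/
noncomputable def sgn (r n : ℕ) (hr : 2 ∣ r) : G r n →* ℤˣ :=
  SemidirectProduct.lift (zmod2ToUnits.comp (csumHom r n hr)) Equiv.Perm.sign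
    (by
      intro g
      refine MonoidHom.ext fun z => ?_
      have h1 : ∀ a x : ℤˣ, a * x * a⁻¹ = x := fun a x => by
        rw [mul_comm a x, mul_inv_cancel_right]
      simp only [MonoidHom.comp_apply, MulEquiv.coe_toMonoidHom, MulAut.conj_apply, h1]
      congr 1
      show csumHom r n hr (z ∘ g.symm) = csumHom r n hr z
      unfold csumHom
      simp only [MonoidHom.coe_mk, OneHom.coe_mk]
      congr 1
      exact Equiv.sum_comp g.symm fun j => ZMod.castHom hr (ZMod 2) (toAdd (z j)))

/-- The group of alternating colored permutations `A_{r,n}`: the kernel of the sign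
character of `G_{r,n}`. -/
noncomputable def Arn (r n : ℕ) (hr : 2 ∣ r) : Subgroup (G r n) := (sgn r n hr).ker

/-- The generators of `A_{r,n}`: `agen r n 0 = a₀ = s₀²` and
`agen r n i = aᵢ = s₀^{r/2} sᵢ` for `i ≥ 1`. -/
def agen (r n : ℕ) (i : ℕ) : G r n :=
  if i = 0 then gen r n 0 ^ 2 else gen r n 0 ^ (r / 2) * gen r n i

/-- The generating set `𝒜 = {a₀, a₁, a₁⁻¹, a₂, …, a_{n-1}}` of `A_{r,n}`. -/
def Aset (r n : ℕ) : Set (G r n) :=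
  {x | ∃ i ≤ n - 1, x = agen r n i} ∪ {(agen r n 1)⁻¹}

/-- The Coxeter-like generating set `{s₀, …, s_{n-1}}` of `G_{r,n}`. -/
def Sset (r n : ℕ) : Set (G r n) := {x | ∃ i < n, x = gen r n i}

/-- Word length of `g` with respect to a generating set `B`. -/
noncomputable def wordLength {H : Type*} [Group H] (B : Set H) (g : H) : ℕ :=
  sInf {k | ∃ w : List H, (∀ x ∈ w, x ∈ B) ∧ w.prod = g ∧ w.length = k}

/-- The element `a₁² ∈ A_{r,n}`. -/
noncomputable def a1sq (r n : ℕ) (hr : 2 ∣ r) : ↥(Arn r n hr) :=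
  ⟨agen r n 1 ^ 2, by rw [Arn, MonoidHom.mem_ker, map_pow]; exact Int.units_sq _⟩

/-- The operator `a ⊘ 2` : the residue mod `r/2` of `a/2` (`a` even) or of
`(a + r/2)/2` (`a` odd). -/
def oslash (r a : ℕ) : ℕ :=
  if a % 2 = 0 then (a / 2) % (r / 2) else ((a + r / 2) / 2) % (r / 2)

/-- `z_i(π)`, the color of digit `i+1` of `π`, as a natural number in `{0, …, r-1}`. -/
def zval (r n : ℕ) (π : G r n) (i : Fin n) : ℕ := (toAdd (π.left i)).val

/-- `csum(π) = Σ z_i(π)`. -/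
def csum (r n : ℕ) (π : G r n) : ℕ := ∑ i, zval r n π i

/-- Rank of the colored letter `b^{[c]}` (with `1 ≤ b ≤ n`, `0 ≤ c ≤ r-1`) in the
length order `n^{[r-1]} < ⋯ < 1^{[1]} < 1 < 2 < ⋯ < n`. -/
def rank (r n : ℕ) (b c : ℕ) : ℕ :=
  if c = 0 then n * (r - 1) + (b - 1) else (n - b) * (r - 1) + (r - 1 - c)

/-- Rank (in the length order) of the letter in position `i` of the window of `π`. -/
def colRank (r n : ℕ) (π : G r n) (i : Fin n) : ℕ :=
  rank r n ((π.right i : ℕ) + 1) (zval r n π (π.right i))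

/-- The inversion number of `π ∈ G_{r,n}` with respect to the length order. -/
noncomputable def inv (r n : ℕ) (π : G r n) : ℕ :=
  Nat.card {p : Fin n × Fin n // p.1 < p.2 ∧ colRank r n π p.2 < colRank r n π p.1}

/-- The ordinary inversion number of a permutation. -/
noncomputable def invPerm (n : ℕ) (τ : Equiv.Perm (Fin n)) : ℕ :=
  Nat.card {p : Fin n × Fin n // p.1 < p.2 ∧ τ p.2 < τ p.1}

/-- The covering map `p : A_{r,n} → G_{r/2,n}`, `p(z, τ) = ((zᵢ ⊘ 2)ᵢ, τ)`. -/
def pmap (r n : ℕ) (π : G r n) : G (r / 2) n :=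
  ⟨fun i => ofAdd ((oslash r (zval r n π i) : ZMod (r / 2))), π.right⟩

/-- The section `s : G_{r/2,n} → A_{r,n}`: doubles all colors (mod `r`), adding `r/2`
to the color of the digit `1` when `inv(|π|)` is odd. -/
noncomputable def smap (r n : ℕ) (π : G (r / 2) n) : G r n :=
  ⟨fun d => ofAdd
      (((2 * zval (r / 2) n π d +
        if (d : ℕ) = 0 ∧ invPerm n π.right % 2 = 1 then r / 2 else 0 : ℕ) : ZMod r)),
   π.right⟩

/-- `c(π) = Σ_{i : z_i(π) ≠ 0} (i - 1)` (digits are `1`-based). -/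
def cstat (r n : ℕ) (π : G r n) : ℕ :=
  ∑ i : Fin n, if zval r n π i ≠ 0 then (i : ℕ) else 0

/-- The number of absolute transparent inversions of `π`. -/
noncomputable def tinv (r n : ℕ) (π : G r n) : ℕ :=
  Nat.card {p : Fin n × Fin n //
    zval r n π p.1 = r / 2 ∧ p.2 < p.1 ∧ π.right⁻¹ p.1 < π.right⁻¹ p.2}

/-- The (digit-indexed) Lehmer code `l_i = #{j : j > i, τ⁻¹(i) > τ⁻¹(j)}`. -/
noncomputable def lehmer (n : ℕ) (τ : Equiv.Perm (Fin n)) (i : Fin n) : ℕ :=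
  Nat.card {j : Fin n // i < j ∧ τ⁻¹ j < τ⁻¹ i}


/-- `μ(π)`: the minimum of `β(ω) + n(ω)` over all factorizations
`ω = b₀ s₀^{i₁} b₁ ⋯ s₀^{i_{k+1}} b_{k+1}` of `π`, where each `b_u` is a word in
`s₁, …, s_{n-1}` only, `n(ω)` is the number of letters `sᵢ` with `i ≠ 0`, and
`β(ω) = Σ_u (i_u ⊘ 2)`. -/
noncomputable def mu (r n : ℕ) (π : G r n) : ℕ :=
  sInf {m | ∃ (b₀ : List ℕ) (L : List (ℕ × List ℕ)),
    (∀ x ∈ b₀, 1 ≤ x ∧ x ≤ n - 1) ∧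
    (∀ q ∈ L, ∀ x ∈ q.2, 1 ≤ x ∧ x ≤ n - 1) ∧
    π = (b₀.map (gen r n)).prod *
        (L.map (fun q => gen r n 0 ^ q.1 * (q.2.map (gen r n)).prod)).prod ∧
    m = (L.map (fun q => oslash r q.1)).sum +
        (b₀.length + (L.map (fun q => q.2.length)).sum)}

/-- The flag-inversion number on `A_{r,n}`:
`finv_A(π) = (r/2)·inv(|π|) + Σᵢ (cᵢ(π) ⊘ 2)` where `cᵢ(π) = r - zᵢ(π⁻¹) (mod r)`. -/
noncomputable def finvA (r n : ℕ) (π : G r n) : ℕ :=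
  (r / 2) * invPerm n π.right + ∑ i, oslash r ((r - zval r n π⁻¹ i) % r)

/-- The number of (colored) right-to-left minima of `π` whose color is not in `{0, r/2}`. -/
noncomputable def rtlMinA (r n : ℕ) (π : G r n) : ℕ :=
  Nat.card {i : Fin n // (∀ j : Fin n, i < j → π.right i < π.right j) ∧
    zval r n π (π.right i) ≠ 0 ∧ zval r n π (π.right i) ≠ r / 2}

/-- The defining relators of the Coxeter-like presentation of `A_{r,n}` on generators
`x₀, …, x_{n-1}`. -/
def rels (r n : ℕ) : Set (FreeGroup (Fin n)) :=
  {w | ∃ i : Fin n, (i : ℕ) = 0 ∧ w = FreeGroup.of i ^ (r / 2)} ∪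
  {w | ∃ i : Fin n, (i : ℕ) = 1 ∧ w = FreeGroup.of i ^ 4} ∪
  {w | ∃ i : Fin n, 2 ≤ (i : ℕ) ∧ w = FreeGroup.of i ^ 2} ∪
  {w | ∃ i j : Fin n, (i : ℕ) ≠ 1 ∧ (j : ℕ) ≠ 1 ∧ (i : ℕ) + 1 < (j : ℕ) ∧
    w = FreeGroup.of i * FreeGroup.of j * (FreeGroup.of i)⁻¹ * (FreeGroup.of j)⁻¹} ∪
  {w | ∃ i j : Fin n, 1 ≤ (i : ℕ) ∧ (j : ℕ) = (i : ℕ) + 1 ∧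
    w = (FreeGroup.of i * FreeGroup.of j) ^ 3} ∪
  {w | ∃ i j : Fin n, (i : ℕ) = 0 ∧ (j : ℕ) = 1 ∧
    w = (FreeGroup.of i * FreeGroup.of j) ^ (2 * r)} ∪
  {w | ∃ i j : Fin n, (i : ℕ) = 0 ∧ (j : ℕ) = 1 ∧
    w = (FreeGroup.of i * (FreeGroup.of j)⁻¹) ^ (2 * r)} ∪
  {w | ∃ i j : Fin n, (i : ℕ) = 0 ∧ (j : ℕ) = 1 ∧
    w = FreeGroup.of i * FreeGroup.of j ^ 2 * (FreeGroup.of i)⁻¹ * (FreeGroup.of j ^ 2)⁻¹} ∪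
  {w | ∃ i j : Fin n, (i : ℕ) = 1 ∧ 2 < (j : ℕ) ∧
    w = FreeGroup.of i * FreeGroup.of j * FreeGroup.of i * (FreeGroup.of j)⁻¹}

end ACP

/-! Write `t = s₀` and `H = ⟨𝒜⟩`. Then `t² = a₀ ∈ H`, and because `r/2` is odd,
`t⁻¹ sᵢ = (t²)^{-(r/2+1)/2} aᵢ` and `sᵢ t⁻¹ = aᵢ⁻¹ (t²)^{(r/2-1)/2}` lie in `H`. So every
generator `sᵢ` of `G_{r,n}` lies in `tH ∩ Ht`, which forces `G_{r,n} = H ∪ Ht`. Since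
`H ⊆ ker φ` and `φ t = -1`, no element of `ker φ` lies in `Ht \ H`, hence `H = ker φ`. -/

namespace Subgroup

variable {G : Type*} [Group G] {H : Subgroup G} {S : Set G} {t : G}

theorem mem_or_mul_inv_mem_of_closure_eq_top (hS : closure S = ⊤) (ht : t ^ 2 ∈ H)
    (hleft : ∀ s ∈ S, t⁻¹ * s ∈ H) (hright : ∀ s ∈ S, s * t⁻¹ ∈ H) (g : G) :
    g ∈ H ∨ g * t⁻¹ ∈ H := by
  have hg : g ∈ closure S := hS ▸ mem_top g
  induction hg using closure_induction_right with
  | one => exact Or.inl H.one_mem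
  | mul_right x _ s hs ih =>
    rcases ih with hx | hx
    · exact Or.inr (by simpa only [mul_assoc] using H.mul_mem hx (hright s hs))
    · refine Or.inl ?_
      have := H.mul_mem (H.mul_mem hx ht) (hleft s hs)
      rwa [show x * t⁻¹ * t ^ 2 * (t⁻¹ * s) = x * s by group] at this
  | mul_inv_cancel x _ s hs ih =>
    rcases ih with hx | hx
    · refine Or.inr ?_
      have := H.mul_mem hx (H.inv_mem (H.mul_mem ht (hleft s hs)))
      rwa [show x * (t ^ 2 * (t⁻¹ * s))⁻¹ = x * s⁻¹ * t⁻¹ by group] at this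
    · refine Or.inl ?_
      have := H.mul_mem hx (H.inv_mem (hright s hs))
      rwa [show x * t⁻¹ * (s * t⁻¹)⁻¹ = x * s⁻¹ by group] at this

theorem eq_ker_of_closure_eq_top {M : Type*} [Group M] {φ : G →* M} (hS : closure S = ⊤)
    (ht : t ^ 2 ∈ H) (hleft : ∀ s ∈ S, t⁻¹ * s ∈ H)
    (hright : ∀ s ∈ S, s * t⁻¹ ∈ H) (hH : H ≤ φ.ker) (hφt : φ t ≠ 1) : H = φ.ker := by
  refine le_antisymm hH fun g hg => ?_
  refine (mem_or_mul_inv_mem_of_closure_eq_top hS ht hleft hright g).resolve_right fun h => ?_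
  apply hφt
  simpa [MonoidHom.mem_ker.1 hg] using hH h

end Subgroup

namespace ACP

open SemidirectProduct Equiv

variable {r n : ℕ}

lemma gen_zero_eq_inl [NeZero n] :
    gen r n 0 = inl (Pi.mulSingle (0 : Fin n) (ofAdd (1 : ZMod r))) := by
  rw [gen, dif_neg (by omega)]
  refine SemidirectProduct.ext ?_ rfl
  funext j
  simp only [left_inl, Pi.mulSingle_apply, ← Fin.val_eq_zero_iff]

lemma gen_eq_inr_swap {i : ℕ} (h0 : 0 < i) (hi : i < n) :
    gen r n i = inr (swap ⟨i - 1, by omega⟩ ⟨i, hi⟩) := by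
  rw [gen, dif_pos ⟨h0, hi⟩]
  rfl

lemma gen_inv {i : ℕ} (h0 : 0 < i) (hi : i < n) : (gen r n i)⁻¹ = gen r n i := by
  rw [gen_eq_inr_swap h0 hi, ← map_inv, swap_inv]

lemma sgn_gen_zero [NeZero n] (hr : 2 ∣ r) : sgn r n hr (gen r n 0) = -1 := by
  rw [gen_zero_eq_inl, sgn, lift_inl]
  have : csumHom r n hr (Pi.mulSingle 0 (ofAdd 1)) = ofAdd 1 := by
    simp only [csumHom, MonoidHom.coe_mk, OneHom.coe_mk, Pi.mulSingle_apply, apply_ite toAdd,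
      toAdd_ofAdd, toAdd_one, apply_ite (ZMod.castHom hr (ZMod 2)), map_one, map_zero,
      Finset.sum_ite_eq', Finset.mem_univ, if_true]
  rw [MonoidHom.comp_apply, this]
  rfl

lemma sgn_gen (hr : 2 ∣ r) {i : ℕ} (h0 : 0 < i) (hi : i < n) :
    sgn r n hr (gen r n i) = -1 := by
  rw [gen_eq_inr_swap h0 hi, sgn, lift_inr]
  exact Perm.sign_swap (by simp [Fin.ext_iff]; omega)

lemma inr_mem_closure_Sset [NeZero n] (τ : Perm (Fin n)) :
    inr τ ∈ Subgroup.closure (Sset r n) := by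
  obtain ⟨m, rfl⟩ := Nat.exists_eq_succ_of_ne_zero (NeZero.ne n)
  have hτ : τ ∈ Subgroup.closure (Set.range fun i : Fin m ↦ swap i.castSucc i.succ) := by
    rw [Subgroup.closure_eq_top_of_mclosure_eq_top (Perm.mclosure_swap_castSucc_succ m)]
    trivial
  have hle : (Subgroup.closure (Set.range fun i : Fin m ↦ swap i.castSucc i.succ)).map inr ≤
      Subgroup.closure (Sset r (m + 1)) := by
    rw [MonoidHom.map_closure, Subgroup.closure_le]
    rintro _ ⟨_, ⟨i, rfl⟩, rfl⟩
    refine Subgroup.subset_closure ⟨i + 1, by omega, ?_⟩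
    rw [gen_eq_inr_swap (by omega) (by omega)]
    rfl
  exact hle (Subgroup.mem_map_of_mem _ hτ)

lemma inl_mulSingle_mem_closure_Sset [NeZero n] (i : Fin n) :
    inl (Pi.mulSingle i (ofAdd (1 : ZMod r))) ∈ Subgroup.closure (Sset r n) := by
  have hconj := inl_aut (φ := permAct r n) (swap 0 i) (Pi.mulSingle 0 (ofAdd (1 : ZMod r)))
  have : permAct r n (swap 0 i) (Pi.mulSingle 0 (ofAdd 1)) =
      Pi.mulSingle i (ofAdd (1 : ZMod r)) := by
    show Pi.mulSingle _ _ ∘ _ = _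
    rw [Pi.mulSingle_comp_equiv]
    simp
  rw [this, ← gen_zero_eq_inl] at hconj
  rw [hconj]
  exact mul_mem (mul_mem (inr_mem_closure_Sset _)
    (Subgroup.subset_closure ⟨0, Nat.pos_of_neZero n, rfl⟩)) (inr_mem_closure_Sset _)

lemma closure_Sset [NeZero r] [NeZero n] : Subgroup.closure (Sset r n) = ⊤ := by
  have hinl : ∀ z, inl z ∈ Subgroup.closure (Sset r n) := by
    intro z
    change z ∈ (Subgroup.closure (Sset r n)).comap inl
    rw [← Finset.univ_prod_mulSingle z]
    refine Subgroup.prod_mem _ fun i _ => ?_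
    have : Pi.mulSingle i (z i) =
        (Pi.mulSingle i (ofAdd (1 : ZMod r)) : Fin n → _) ^ (toAdd (z i)).val := by
      rw [← Pi.mulSingle_pow, ← ofAdd_nsmul, nsmul_one, ZMod.natCast_zmod_val]
      rfl
    rw [this, Subgroup.mem_comap, map_pow]
    exact pow_mem (inl_mulSingle_mem_closure_Sset i) _
  refine eq_top_iff.2 fun g _ => ?_
  rw [← inl_left_mul_inr_right g]
  exact mul_mem (hinl _) (inr_mem_closure_Sset _)

lemma sgn_agen (hr : 2 ∣ r) (hodd : Odd (r / 2)) {i : ℕ} (hi : i < n) :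
    sgn r n hr (agen r n i) = 1 := by
  have : NeZero n := ⟨by omega⟩
  rcases Nat.eq_zero_or_pos i with rfl | h0
  · simp [agen, sgn_gen_zero hr]
  · simp [agen, h0.ne', sgn_gen_zero hr, sgn_gen hr h0 hi, hodd.neg_one_pow]

lemma agen_mem_closure_Aset {i : ℕ} (hi : i < n) : agen r n i ∈ Subgroup.closure (Aset r n) :=
  Subgroup.subset_closure (Or.inl ⟨i, by omega, rfl⟩)

lemma gen_zero_sq_mem_closure_Aset (hn : 0 < n) : gen r n 0 ^ 2 ∈ Subgroup.closure (Aset r n) :=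
  agen_mem_closure_Aset hn

lemma gen_zero_inv_mul_gen_mem_closure_Aset (hodd : Odd (r / 2)) {i : ℕ} (hi : i < n) :
    (gen r n 0)⁻¹ * gen r n i ∈ Subgroup.closure (Aset r n) := by
  obtain ⟨m, hm⟩ := hodd
  rcases Nat.eq_zero_or_pos i with rfl | h0
  · simp
  have h := mul_mem (zpow_mem (gen_zero_sq_mem_closure_Aset (r := r) (by omega)) (-(m + 1)))
    (agen_mem_closure_Aset hi)
  simp only [agen, h0.ne', if_false, hm] at h
  convert h using 1
  group

lemma gen_mul_gen_zero_inv_mem_closure_Aset (hodd : Odd (r / 2)) {i : ℕ} (hi : i < n) :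
    gen r n i * (gen r n 0)⁻¹ ∈ Subgroup.closure (Aset r n) := by
  obtain ⟨m, hm⟩ := hodd
  rcases Nat.eq_zero_or_pos i with rfl | h0
  · simp
  have h := mul_mem (inv_mem (agen_mem_closure_Aset hi))
    (pow_mem (gen_zero_sq_mem_closure_Aset (r := r) (by omega)) m)
  simp only [agen, h0.ne', if_false, hm, mul_inv_rev, gen_inv h0 hi] at h
  convert h using 1
  group

end ACP

theorem Aset_generates (r n : ℕ) (hn : 2 ≤ n) (hr : r % 4 = 2) :
    Subgroup.closure (ACP.Aset r n) = ACP.Arn r n (by omega) := by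
  have : NeZero r := ⟨by omega⟩
  have : NeZero n := ⟨by omega⟩
  have hodd : Odd (r / 2) := Nat.odd_iff.2 (by omega)
  refine Subgroup.eq_ker_of_closure_eq_top ACP.closure_Sset
    (ACP.gen_zero_sq_mem_closure_Aset (by omega))
    (fun _ ⟨i, hi, hs⟩ => hs ▸ ACP.gen_zero_inv_mul_gen_mem_closure_Aset hodd hi)
    (fun _ ⟨i, hi, hs⟩ => hs ▸ ACP.gen_mul_gen_zero_inv_mem_closure_Aset hodd hi)
    ?_ (by rw [ACP.sgn_gen_zero]; decide)
  rw [Subgroup.closure_le]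
  rintro _ (⟨i, hi, rfl⟩ | rfl)
  · exact ACP.sgn_agen _ hodd (by omega)
  · exact inv_mem (MonoidHom.mem_ker.2 (ACP.sgn_agen _ hodd (by omega)))
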